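/- arXiv:2411.01673 — 2 statements merged into one kernel-verified Lean document; each statement's English description precedes it below -/
import Mathlib

section
/- (Proposition 1, adjoint gradient formula.) Let f : (Fin N → ℝ) → (Fin N → ℝ) be continuously differentiable, let w : ℝ → (Fin N → ℝ) solve w'(t) = f(w(t)) on [t₀, t_k] with w(t₀) = a, and let L : ℝ → Matrix (Fin N) (Fin N) ℝ solve the variational equation L'(t) = Df(w(t)) * L(t) on [t₀, t_k] with L(t₀) = 1, where Df(w(t)) is the Jacobian matrix of f at w(t). Suppose φ : (Fin N → ℝ) → (Fin N → ℝ) is differentiable at a with Jacobian matrix L(t_k) (φ is the flow map from time t₀ to time t_k). Let C be a q × N real matrix, e_j the j-th standard basis vector of Fin q → ℝ, and let ξ : ℝ → (Fin N → ℝ) satisfy -ξ'(t) = (Df(w(t)))ᵀ *ᵥ ξ(t) on [t₀, t_k] with ξ(t_k) = Cᵀ *ᵥ e_j. Then the gradient at a of the scalar function a ↦ ⟨e_j, C *ᵥ φ(a)⟩ equals ξ(t₀); equivalently, (L(t_k))ᵀ *ᵥ (Cᵀ *ᵥ e_j) = ξ(t₀). -/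
/-! The pairing `ξ t ᵥ* L t = (L t)ᵀ *ᵥ ξ t` of the adjoint solution with the variational
solution is conserved: with `A t = Df(w t)` its derivative is `-(ξ ᵥ* A) ᵥ* L + ξ ᵥ* (A * L) = 0`.
Evaluating it at `t_k` and at `t₀` (where `L = 1`) gives `(L t_k)ᵀ *ᵥ (Cᵀ *ᵥ e_j) = ξ t₀`, and by the chain rule the
left side is the gradient of `x ↦ ⟨e_j, C *ᵥ φ x⟩` at `a`. -/

open Matrix

attribute [local instance] Matrix.normedAddCommGroup Matrix.normedSpace

/-- The Jacobian matrix of a map `f : (Fin N → ℝ) → (Fin N → ℝ)` at a point. -/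
noncomputable def jacobian {N : ℕ} (f : (Fin N → ℝ) → (Fin N → ℝ)) (x : Fin N → ℝ) :
    Matrix (Fin N) (Fin N) ℝ :=
  LinearMap.toMatrix' (fderiv ℝ f x : (Fin N → ℝ) →ₗ[ℝ] (Fin N → ℝ))

/-- The continuous linear functional `x' ↦ ⟨v, x'⟩` on `Fin N → ℝ`
(Euclidean inner product against a fixed vector `v`). -/
noncomputable def dotCLM {N : ℕ} (v : Fin N → ℝ) : (Fin N → ℝ) →L[ℝ] ℝ :=
  LinearMap.toContinuousLinearMap
    { toFun := fun x => v ⬝ᵥ x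
      map_add' := fun x y => by simp [dotProduct_add]
      map_smul' := fun c x => by simp [dotProduct_smul] }

theorem HasDerivAt.vecMul {m n : Type*} [Fintype m] [Fintype n] {v : ℝ → m → ℝ}
    {M : ℝ → Matrix m n ℝ} {v' : m → ℝ} {M' : Matrix m n ℝ} {t : ℝ}
    (hv : HasDerivAt v v' t) (hM : HasDerivAt M M' t) :
    HasDerivAt (fun t => v t ᵥ* M t) (v' ᵥ* M t + v t ᵥ* M') t :=
  hasDerivAt_pi.2 fun i => by
    have hsum := HasDerivAt.fun_sum (u := Finset.univ) fun k _ =>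
      (hasDerivAt_pi.1 hv k).mul (hasDerivAt_pi.1 (hasDerivAt_pi.1 hM k) i)
    rw [Finset.sum_add_distrib] at hsum
    exact hsum

theorem hasDerivAt_vecMul_of_adjoint {n : Type*} [Fintype n] {A L : ℝ → Matrix n n ℝ}
    {ξ : ℝ → n → ℝ} {t : ℝ} (hL : HasDerivAt L (A t * L t) t)
    (hξ : HasDerivAt ξ (-((A t)ᵀ *ᵥ ξ t)) t) :
    HasDerivAt (fun t => ξ t ᵥ* L t) 0 t := by
  convert hξ.vecMul hL using 1
  rw [mulVec_transpose, neg_vecMul, vecMul_vecMul, neg_add_cancel]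

theorem vecMul_eq_of_adjoint {n : Type*} [Fintype n] {A L : ℝ → Matrix n n ℝ}
    {ξ : ℝ → n → ℝ} {t₀ t₁ : ℝ} (ht : t₀ ≤ t₁)
    (hL : ∀ t ∈ Set.Icc t₀ t₁, HasDerivAt L (A t * L t) t)
    (hξ : ∀ t ∈ Set.Icc t₀ t₁, HasDerivAt ξ (-((A t)ᵀ *ᵥ ξ t)) t) :
    ξ t₁ ᵥ* L t₁ = ξ t₀ ᵥ* L t₀ := by
  have hderiv := fun t hts => hasDerivAt_vecMul_of_adjoint (hL t hts) (hξ t hts)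
  exact constant_of_has_deriv_right_zero
    (fun t hts => (hderiv t hts).continuousAt.continuousWithinAt)
    (fun t hts => (hderiv t (Set.Ico_subset_Icc_self hts)).hasDerivWithinAt) t₁ ⟨ht, le_rfl⟩

theorem hasFDerivAt_dotProduct_of_hasFDerivAt_mulVecLin {N : ℕ}
    {φ : (Fin N → ℝ) → (Fin N → ℝ)} {M : Matrix (Fin N) (Fin N) ℝ} {a : Fin N → ℝ}
    (hφ : HasFDerivAt φ (LinearMap.toContinuousLinearMap (Matrix.mulVecLin M)) a)
    (v : Fin N → ℝ) :
    HasFDerivAt (fun x => v ⬝ᵥ φ x) (dotCLM (Mᵀ *ᵥ v)) a := by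
  refine ((dotCLM v).hasFDerivAt.comp a hφ).congr_fderiv ?_
  ext x
  simp [dotCLM, dotProduct_mulVec, mulVec_transpose]

theorem adjoint_gradient_formula_general {N q : ℕ}
    (f : (Fin N → ℝ) → (Fin N → ℝ))
    (w : ℝ → (Fin N → ℝ)) (a : Fin N → ℝ) (t₀ tk : ℝ) (ht : t₀ ≤ tk)
    (L : ℝ → Matrix (Fin N) (Fin N) ℝ)
    (hL : ∀ t ∈ Set.Icc t₀ tk, HasDerivAt L (jacobian f (w t) * L t) t)
    (hL0 : L t₀ = 1)
    (φ : (Fin N → ℝ) → (Fin N → ℝ))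
    (hφ : HasFDerivAt φ
      (LinearMap.toContinuousLinearMap (Matrix.mulVecLin (L tk))) a)
    (C : Matrix (Fin q) (Fin N) ℝ) (j : Fin q)
    (ξ : ℝ → (Fin N → ℝ))
    (hξ : ∀ t ∈ Set.Icc t₀ tk, HasDerivAt ξ (-((jacobian f (w t))ᵀ *ᵥ ξ t)) t)
    (hξk : ξ tk = Cᵀ *ᵥ Pi.single j 1) :
    HasFDerivAt (fun x => Pi.single j (1 : ℝ) ⬝ᵥ (C *ᵥ φ x)) (dotCLM (ξ t₀)) a ∧
      (L tk)ᵀ *ᵥ (Cᵀ *ᵥ Pi.single j 1) = ξ t₀ := by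
  have hadjoint : (L tk)ᵀ *ᵥ (Cᵀ *ᵥ Pi.single j 1) = ξ t₀ := by
    rw [mulVec_transpose, ← hξk, vecMul_eq_of_adjoint ht hL hξ, hL0, vecMul_one]
  refine ⟨?_, hadjoint⟩
  simp_rw [dotProduct_mulVec, ← mulVec_transpose]
  rw [← hadjoint]
  exact hasFDerivAt_dotProduct_of_hasFDerivAt_mulVecLin hφ _

/-- Proposition 1 (adjoint gradient formula). Let `w` solve `w' = f (w)` on `[t₀, t_k]`
with `w t₀ = a`, let `L` solve the variational equation `L' = Df(w t) * L`, `L t₀ = 1`,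
and let `φ` (the flow map from `t₀` to `t_k`) be differentiable at `a` with Jacobian
matrix `L t_k`. If `ξ` satisfies the backward adjoint equation
`-ξ' = (Df(w t))ᵀ *ᵥ ξ` with terminal condition `ξ t_k = Cᵀ *ᵥ e_j`, then the gradient
at `a` of `a ↦ ⟨e_j, C *ᵥ φ a⟩` equals `ξ t₀`; equivalently
`(L t_k)ᵀ *ᵥ (Cᵀ *ᵥ e_j) = ξ t₀`. -/
theorem adjoint_gradient_formula {N q : ℕ}
    (f : (Fin N → ℝ) → (Fin N → ℝ)) (hf : ContDiff ℝ 1 f)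
    (w : ℝ → (Fin N → ℝ)) (a : Fin N → ℝ) (t₀ tk : ℝ) (ht : t₀ ≤ tk)
    (hw : ∀ t ∈ Set.Icc t₀ tk, HasDerivAt w (f (w t)) t)
    (hw0 : w t₀ = a)
    (L : ℝ → Matrix (Fin N) (Fin N) ℝ)
    (hL : ∀ t ∈ Set.Icc t₀ tk, HasDerivAt L (jacobian f (w t) * L t) t)
    (hL0 : L t₀ = 1)
    (φ : (Fin N → ℝ) → (Fin N → ℝ))
    (hφ : HasFDerivAt φ
      (LinearMap.toContinuousLinearMap (Matrix.mulVecLin (L tk))) a)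
    (C : Matrix (Fin q) (Fin N) ℝ) (j : Fin q)
    (ξ : ℝ → (Fin N → ℝ))
    (hξ : ∀ t ∈ Set.Icc t₀ tk, HasDerivAt ξ (-((jacobian f (w t))ᵀ *ᵥ ξ t)) t)
    (hξk : ξ tk = Cᵀ *ᵥ Pi.single j 1) :
    HasFDerivAt (fun x => Pi.single j (1 : ℝ) ⬝ᵥ (C *ᵥ φ x)) (dotCLM (ξ t₀)) a ∧
      (L tk)ᵀ *ᵥ (Cᵀ *ᵥ Pi.single j 1) = ξ t₀ :=
  adjoint_gradient_formula_general f w a t₀ tk ht L hL hL0 φ hφ C j ξ hξ hξk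
end

section
/- (Invariance of the trial subspace under Petrov-Galerkin dynamics.) Let P be an N × N real matrix with P * P = P, let f : (Fin N → ℝ) → (Fin N → ℝ) be continuous, and let ŵ : ℝ → (Fin N → ℝ) be differentiable with ŵ'(t) = P *ᵥ f(P *ᵥ ŵ(t)) for all t ≥ 0 and ŵ(0) = P *ᵥ w₀ for some w₀. Then P *ᵥ ŵ(t) = ŵ(t) for all t ≥ 0; that is, the solution of the Petrov-Galerkin model remains in the range of the projector P for all time. -/
open Matrix

/-- Invariance of the trial subspace under Petrov-Galerkin dynamics: if `P` is
idempotent, `f` is continuous, and `wh` satisfies `wh' = P *ᵥ f (P *ᵥ wh)` for `t ≥ 0`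
with `wh 0 = P *ᵥ w₀`, then `P *ᵥ wh t = wh t` for all `t ≥ 0`. -/
theorem petrov_galerkin_range_invariant {N : ℕ}
    (P : Matrix (Fin N) (Fin N) ℝ) (hidem : P * P = P)
    (f : (Fin N → ℝ) → (Fin N → ℝ)) (hf : Continuous f)
    (wh : ℝ → (Fin N → ℝ)) (w₀ : Fin N → ℝ)
    (hwh : ∀ t : ℝ, 0 ≤ t → HasDerivAt wh (P *ᵥ f (P *ᵥ wh t)) t)
    (hwh0 : wh 0 = P *ᵥ w₀) :
    ∀ t : ℝ, 0 ≤ t → P *ᵥ wh t = wh t := by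
  set L : (Fin N → ℝ) →L[ℝ] (Fin N → ℝ) := (Matrix.mulVecLin P).toContinuousLinearMap
  have hL : ∀ v, L v = P *ᵥ v := fun v => rfl
  set g : ℝ → (Fin N → ℝ) := fun t => P *ᵥ wh t - wh t with hg
  have hg' : ∀ t : ℝ, 0 ≤ t → HasDerivAt g 0 t := by
    intro t ht
    have h1 : HasDerivAt (fun s => L (wh s)) (L (P *ᵥ f (P *ᵥ wh t))) t :=
      L.hasFDerivAt.comp_hasDerivAt t (hwh t ht)
    have h2 := h1.sub (hwh t ht)
    have : L (P *ᵥ f (P *ᵥ wh t)) - P *ᵥ f (P *ᵥ wh t) = 0 := by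
      rw [hL, Matrix.mulVec_mulVec, hidem, sub_self]
    rwa [this] at h2
  intro t ht
  have key : ∀ x ∈ Set.Icc (0:ℝ) t, g x = g 0 := by
    apply constant_of_has_deriv_right_zero
    · intro x hx
      exact (hg' x hx.1).continuousAt.continuousWithinAt
    · intro x hx
      exact (hg' x hx.1).hasDerivWithinAt
  have h0 : g 0 = 0 := by
    simp [hg, hwh0, Matrix.mulVec_mulVec, hidem]
  have := key t ⟨ht, le_refl t⟩
  rw [h0] at this
  exact sub_eq_zero.mp this
end
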